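/- arXiv:2312.17140 — 6 statements merged into one kernel-verified Lean document; each statement's English description precedes it below -/
import Mathlib

section
/- For any finite simple graph G = (V, E) with m edges and n vertices in which every vertex has degree at most Δ, there exists a downward sequence V = S₀ ⊋ S₁ ⊋ ⋯ ⊋ S_n = ∅ such that for every i ∈ {0, 1, …, n}, |E[S_i, V \ S_i]| ≤ m/2 + √(m·Δ) + Δ. -/
open Finset
open scoped Classical

/-- The number of edges of `G` with one endpoint in `S` and the other outside `S`. -/
noncomputable def cutCard {V : Type*} [Fintype V] (G : SimpleGraph V) (S : Finset V) : ℕ :=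
  (G.edgeFinset.filter fun e => (∃ u ∈ e, u ∈ S) ∧ ∃ v ∈ e, v ∉ S).card

/-!
Let `X`, `Y` count the ordered adjacent pairs inside `S` and inside `Sᶜ`, and `C` the edges of
the cut, so that `X + Y + 2C = 2m`. Vertices are removed one at a time while keeping
`C² ≤ XY + 4mD`, where `D = min Δ m` bounds all degrees. Moving `v` out of `S` turns
`(X, Y, C)` into `(X - 2a, Y + 2b, C + a - b)`, where `a` and `b` are the degrees of `v` into
`S` and `Sᶜ`. If `2C² ≥ 2XY + D(X + C)`, averaging this change over `v ∈ S` shows that some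
vertex does not increase `C² - XY`; otherwise the cut is small enough that every vertex keeps
the invariant. Finally `4XY ≤ (X + Y)² = (2m - 2C)²` turns the invariant into
`C ≤ m/2 + 2D ≤ m/2 + Δ + √(mΔ)`.
-/

theorem sq_le_after_move_of_small_cut {X Y C a b Δ m : ℤ} (hX : 2 * a ≤ X) (hY : 0 ≤ Y)
    (hC : 0 ≤ C) (ha : 0 ≤ a) (hb : 0 ≤ b) (hab : a + b ≤ Δ) (hΔm : Δ ≤ m)
    (hsum : X + Y + 2 * C = 2 * m) (hsmall : 2 * C ^ 2 < 2 * X * Y + Δ * (X + C)) :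
    (C + a - b) ^ 2 ≤ (X - 2 * a) * (Y + 2 * b) + 4 * m * Δ := by
  have hmove : (C + a - b) ^ 2 ≤ (C + Δ) ^ 2 := by nlinarith
  by_cases hle : (C + Δ) ^ 2 ≤ 4 * m * Δ
  · nlinarith
  · -- `(C + Δ)² > 4mΔ ≥ 4Δ²` forces `Δ ≤ C`, and then `hsmall` pays for the worst move.
    have hΔC : Δ ≤ C := by nlinarith
    have : (X - 2 * Δ) * Y ≤ (X - 2 * a) * (Y + 2 * b) := by nlinarith
    nlinarith

theorem two_mul_le_of_sq_le_mul_add {X Y C Δ m : ℤ} (hX : 0 ≤ X) (hY : 0 ≤ Y) (hC : 0 ≤ C)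
    (hΔ : 0 ≤ Δ) (hsum : X + Y + 2 * C = 2 * m) (h : C ^ 2 ≤ X * Y + 4 * m * Δ) :
    2 * C ≤ m + 4 * Δ := by
  have hXY : 4 * (X * Y) ≤ (2 * m - 2 * C) ^ 2 := by nlinarith [sq_nonneg (X - Y)]
  have : m * (2 * C) ≤ m * (m + 4 * Δ) := by nlinarith
  rcases (show 0 ≤ m by linarith).eq_or_lt with hm | hm
  · subst hm; linarith
  · exact le_of_mul_le_mul_left this hm

theorem exists_sq_le_after_move_of_large_cut {ι : Type*} {S : Finset ι} (hS : S.Nonempty)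
    {a b : ι → ℤ} {X Y C Δ K : ℤ} (hX : ∑ i ∈ S, a i = X) (hC : ∑ i ∈ S, b i = C)
    (hab : ∀ i ∈ S, 0 ≤ a i + b i ∧ a i + b i ≤ Δ)
    (hlarge : 2 * X * Y + Δ * (X + C) ≤ 2 * C ^ 2) (h : C ^ 2 ≤ X * Y + K) :
    ∃ i ∈ S, (C + a i - b i) ^ 2 ≤ (X - 2 * a i) * (Y + 2 * b i) + K := by
  have hsq : ∑ i ∈ S, (a i + b i) ^ 2 ≤ Δ * (X + C) := calc
    ∑ i ∈ S, (a i + b i) ^ 2 ≤ ∑ i ∈ S, Δ * (a i + b i) :=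
      sum_le_sum fun i hi => by nlinarith [hab i hi]
    _ = Δ * (X + C) := by rw [← mul_sum, sum_add_distrib, hX, hC]
  -- the summand is the decrease of `C² - XY` when `i` moves
  have hgain : ∑ i ∈ S, (0 : ℤ) ≤
      ∑ i ∈ S, (2 * (X + C) * b i - 2 * (Y + C) * a i - (a i + b i) ^ 2) := by
    simp only [sum_sub_distrib, ← mul_sum, hX, hC, sum_const_zero]
    nlinarith
  obtain ⟨i, hi, hgain_i⟩ := exists_le_of_sum_le hS hgain
  exact ⟨i, hi, by nlinarith⟩

namespace SimpleGraph

variable {V : Type*} (G : SimpleGraph V)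

theorem card_interedges_comm (s t : Finset V) :
    #(G.interedges s t) = #(G.interedges t s) :=
  haveI : Std.Symm G.Adj := ⟨fun _ _ h => h.symm⟩
  Rel.card_interedges_comm s t

theorem card_interedges_singleton_left (v : V) (t : Finset V) :
    #(G.interedges {v} t) = #(t.filter (G.Adj v)) := by
  simp only [interedges_def, card_filter, sum_product, sum_singleton]

theorem card_interedges_eq_sum (s t : Finset V) :
    #(G.interedges s t) = ∑ v ∈ s, #(G.interedges {v} t) := by
  simp only [interedges_def, card_filter, sum_product, sum_singleton]

theorem card_interedges_union_left {s₁ s₂ : Finset V} (h : Disjoint s₁ s₂) (t : Finset V) :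
    #(G.interedges (s₁ ∪ s₂) t) = #(G.interedges s₁ t) + #(G.interedges s₂ t) := by
  rw [card_interedges_eq_sum, sum_union h, ← card_interedges_eq_sum, ← card_interedges_eq_sum]

theorem card_interedges_union_right (s : Finset V) {t₁ t₂ : Finset V} (h : Disjoint t₁ t₂) :
    #(G.interedges s (t₁ ∪ t₂)) = #(G.interedges s t₁) + #(G.interedges s t₂) := by
  simp only [card_interedges_comm G s, card_interedges_union_left G h]

theorem card_interedges_singleton_self (v : V) : #(G.interedges {v} {v}) = 0 := by
  simp [interedges_def]

theorem card_interedges_insert_self {v : V} {T : Finset V} (hv : v ∉ T) :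
    #(G.interedges (insert v T) (insert v T)) =
      #(G.interedges T T) + 2 * #(G.interedges {v} T) := by
  have hdisj : Disjoint {v} T := disjoint_singleton_left.mpr hv
  rw [insert_eq, card_interedges_union_left G hdisj, card_interedges_union_right G _ hdisj,
    card_interedges_union_right G _ hdisj, card_interedges_singleton_self,
    card_interedges_comm G T {v}]
  ring

theorem card_interedges_singleton_erase {v : V} (S : Finset V) :
    #(G.interedges {v} (S.erase v)) = #(G.interedges {v} S) := by
  by_cases hv : v ∈ S
  · conv_rhs => rw [← insert_erase hv, insert_eq,
      card_interedges_union_right G _ (disjoint_singleton_left.mpr (notMem_erase v S)),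
      card_interedges_singleton_self, zero_add]
  · rw [erase_eq_of_notMem hv]

theorem card_interedges_erase_self {v : V} {S : Finset V} (hv : v ∈ S) :
    #(G.interedges S S) =
      #(G.interedges (S.erase v) (S.erase v)) + 2 * #(G.interedges {v} S) := by
  conv_lhs => rw [← insert_erase hv]
  rw [card_interedges_insert_self G (notMem_erase v S), card_interedges_singleton_erase]

variable [Fintype V]

theorem card_interedges_singleton_univ (v : V) : #(G.interedges {v} univ) = G.degree v := by
  rw [card_interedges_singleton_left, ← card_neighborFinset_eq_degree, neighborFinset_eq_filter]

theorem card_interedges_univ : #(G.interedges univ univ) = 2 * #G.edgeFinset := by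
  rw [card_interedges_eq_sum, ← sum_degrees_eq_twice_card_edges]
  simp only [card_interedges_singleton_univ]

theorem card_interedges_singleton_add_compl (v : V) (S : Finset V) :
    #(G.interedges {v} S) + #(G.interedges {v} Sᶜ) = G.degree v := by
  rw [← card_interedges_union_right G _ disjoint_compl_right, union_compl,
    card_interedges_singleton_univ]

theorem card_interedges_add_add_compl (S : Finset V) :
    #(G.interedges S S) + #(G.interedges Sᶜ Sᶜ) + 2 * #(G.interedges S Sᶜ) =
      2 * #G.edgeFinset := by
  rw [← card_interedges_univ, ← union_compl S,
    card_interedges_union_left G disjoint_compl_right,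
    card_interedges_union_right G _ disjoint_compl_right,
    card_interedges_union_right G _ disjoint_compl_right, card_interedges_comm G Sᶜ S]
  ring

theorem card_interedges_compl_erase {v : V} {S : Finset V} (hv : v ∈ S) :
    #(G.interedges (S.erase v)ᶜ (S.erase v)ᶜ) =
      #(G.interedges Sᶜ Sᶜ) + 2 * #(G.interedges {v} Sᶜ) := by
  rw [compl_erase, card_interedges_insert_self G (notMem_compl.mpr hv)]

theorem card_interedges_erase_compl_add {v : V} {S : Finset V} (hv : v ∈ S) :
    #(G.interedges (S.erase v) (S.erase v)ᶜ) + #(G.interedges {v} Sᶜ) =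
      #(G.interedges S Sᶜ) + #(G.interedges {v} S) := by
  have hS : S = {v} ∪ S.erase v := by rw [← insert_eq, insert_erase hv]
  have hSc : (S.erase v)ᶜ = {v} ∪ Sᶜ := by rw [compl_erase, insert_eq]
  have hdisj : Disjoint {v} (S.erase v) := disjoint_singleton_left.mpr (notMem_erase v S)
  have hdisjc : Disjoint {v} Sᶜ := disjoint_singleton_left.mpr (notMem_compl.mpr hv)
  have hcut := card_interedges_union_left G hdisj Sᶜ
  rw [← hS] at hcut
  rw [hcut, hSc, card_interedges_union_right G _ hdisjc, card_interedges_comm G _ {v},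
    card_interedges_singleton_erase]
  ring

theorem cutCard_eq_card_interedges (S : Finset V) : cutCard G S = #(G.interedges S Sᶜ) := by
  symm
  refine card_nbij (fun p => s(p.1, p.2)) ?_ ?_ ?_
  · rintro ⟨u, w⟩ h
    simp only [mem_coe, mem_interedges_iff, mem_compl] at h
    simp only [coe_filter, Set.mem_ofPred, mem_edgeFinset, mem_edgeSet, Sym2.mem_iff]
    exact ⟨h.2.2, ⟨u, .inl rfl, h.1⟩, w, .inr rfl, h.2.1⟩
  · rintro ⟨u₁, w₁⟩ h₁ ⟨u₂, w₂⟩ h₂ heq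
    simp only [mem_coe, mem_interedges_iff, mem_compl] at h₁ h₂
    rcases Sym2.eq_iff.mp heq with ⟨rfl, rfl⟩ | ⟨rfl, rfl⟩
    · rfl
    · exact absurd h₂.1 h₁.2.1
  · intro e he
    obtain ⟨x, y⟩ := e
    simp only [coe_filter, Set.mem_ofPred, mem_edgeFinset, mem_edgeSet, Sym2.mem_iff] at he
    obtain ⟨hxy, ⟨u, hu, huS⟩, w, hw, hwS⟩ := he
    rcases hu with rfl | rfl <;> rcases hw with rfl | rfl
    · exact absurd huS hwS
    · exact ⟨(u, w), by simpa [mem_interedges_iff] using ⟨huS, hwS, hxy⟩, rfl⟩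
    · refine ⟨(u, w), ?_, Sym2.eq_swap⟩
      simpa [mem_interedges_iff] using ⟨huS, hwS, hxy.symm⟩
    · exact absurd huS hwS

def IsBalancedCut (Δ : ℕ) (S : Finset V) : Prop :=
  (#(G.interedges S Sᶜ) : ℤ) ^ 2 ≤
    #(G.interedges S S) * #(G.interedges Sᶜ Sᶜ) + 4 * #G.edgeFinset * Δ

theorem isBalancedCut_univ (Δ : ℕ) : G.IsBalancedCut Δ univ := by
  simp only [IsBalancedCut, compl_univ, interedges_def, product_empty, filter_empty,
    card_empty, Nat.cast_zero]
  positivity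

theorem exists_erase_isBalancedCut {Δ : ℕ} (hdeg : ∀ v, G.degree v ≤ Δ)
    (hΔ : Δ ≤ #G.edgeFinset) {S : Finset V} (hS : S.Nonempty) (h : G.IsBalancedCut Δ S) :
    ∃ v ∈ S, G.IsBalancedCut Δ (S.erase v) := by
  set X : ℤ := (#(G.interedges S S) : ℤ)
  set Y : ℤ := (#(G.interedges Sᶜ Sᶜ) : ℤ)
  set C : ℤ := (#(G.interedges S Sᶜ) : ℤ)
  set a : V → ℤ := fun v => (#(G.interedges {v} S) : ℤ)
  set b : V → ℤ := fun v => (#(G.interedges {v} Sᶜ) : ℤ)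
  have hsum : X + Y + 2 * C = 2 * (#G.edgeFinset : ℤ) := by
    simp only [X, Y, C]
    exact_mod_cast G.card_interedges_add_add_compl S
  have hdeg' (v : V) : a v + b v ≤ Δ := by
    simp only [a, b]
    exact_mod_cast (G.card_interedges_singleton_add_compl v S).trans_le (hdeg v)
  have hX (v : V) (hv : v ∈ S) :
      (#(G.interedges (S.erase v) (S.erase v)) : ℤ) = X - 2 * a v := by
    have := G.card_interedges_erase_self hv
    simp only [X, a]
    omega
  have hY (v : V) (hv : v ∈ S) :
      (#(G.interedges (S.erase v)ᶜ (S.erase v)ᶜ) : ℤ) = Y + 2 * b v := by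
    have := G.card_interedges_compl_erase hv
    simp only [Y, b]
    omega
  have hC (v : V) (hv : v ∈ S) :
      (#(G.interedges (S.erase v) (S.erase v)ᶜ) : ℤ) = C + a v - b v := by
    have := G.card_interedges_erase_compl_add hv
    simp only [C, a, b]
    omega
  have hmove (v : V) (hv : v ∈ S)
      (hle : (C + a v - b v) ^ 2 ≤ (X - 2 * a v) * (Y + 2 * b v) + 4 * #G.edgeFinset * Δ) :
      G.IsBalancedCut Δ (S.erase v) := by
    rwa [IsBalancedCut, hX v hv, hY v hv, hC v hv]
  by_cases hlarge : 2 * X * Y + Δ * (X + C) ≤ 2 * C ^ 2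
  · have hsa : ∑ v ∈ S, a v = X := by
      simp only [a, X]
      exact_mod_cast (G.card_interedges_eq_sum S S).symm
    have hsb : ∑ v ∈ S, b v = C := by
      simp only [b, C]
      exact_mod_cast (G.card_interedges_eq_sum S Sᶜ).symm
    obtain ⟨v, hv, hle⟩ := exists_sq_le_after_move_of_large_cut hS hsa hsb
      (fun v _ => ⟨by positivity, hdeg' v⟩) hlarge h
    exact ⟨v, hv, hmove v hv hle⟩
  · obtain ⟨v, hv⟩ := hS
    refine ⟨v, hv, hmove v hv (sq_le_after_move_of_small_cut ?_ (by positivity) (by positivity)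
      (by positivity) (by positivity) (hdeg' v) (by exact_mod_cast hΔ) hsum (not_le.mp hlarge))⟩
    have := hX v hv
    omega

theorem two_mul_cutCard_le {Δ : ℕ} {S : Finset V} (h : G.IsBalancedCut Δ S) :
    2 * cutCard G S ≤ #G.edgeFinset + 4 * Δ := by
  rw [cutCard_eq_card_interedges]
  have hsum := G.card_interedges_add_add_compl S
  zify at hsum ⊢
  exact two_mul_le_of_sq_le_mul_add (by positivity) (by positivity) (by positivity)
    (by positivity) hsum h

end SimpleGraph

theorem exists_downward_sequence {α : Type*} (P : Finset α → Prop)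
    (hstep : ∀ T : Finset α, T.Nonempty → P T → ∃ v ∈ T, P (T.erase v))
    (T : Finset α) (hT : P T) :
    ∃ S : ℕ → Finset α, S 0 = T ∧ S #T = ∅ ∧
      (∀ i < #T, ∃ v ∈ S i, S (i + 1) = (S i).erase v) ∧ ∀ i ≤ #T, P (S i) := by
  induction hk : #T generalizing T with
  | zero =>
    refine ⟨fun _ => T, rfl, card_eq_zero.mp hk, fun i hi => absurd hi (Nat.not_lt_zero i),
      fun _ _ => hT⟩
  | succ k ih =>
    obtain ⟨v, hv, hPv⟩ := hstep T (card_pos.mp (by omega)) hT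
    obtain ⟨S, hS0, hSk, hSstep, hSP⟩ :=
      ih (T.erase v) hPv (by rw [card_erase_of_mem hv, hk, Nat.add_sub_cancel])
    refine ⟨fun | 0 => T | i + 1 => S i, rfl, hSk, ?_, ?_⟩
    · rintro (_ | i) hi
      · exact ⟨v, hv, hS0⟩
      · exact hSstep i (by omega)
    · rintro (_ | i) hi
      · exact hT
      · exact hSP i (by omega)

theorem min_le_sqrt_mul {a b : ℝ} (ha : 0 ≤ a) (hb : 0 ≤ b) : min a b ≤ √(a * b) :=
  Real.le_sqrt_of_sq_le (by nlinarith [min_le_left a b, min_le_right a b, le_min ha hb])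

/-- For any finite simple graph `G` with `m` edges, `n` vertices and maximum degree
at most `Δ`, there is a downward sequence `V = S₀ ⊋ S₁ ⊋ ⋯ ⊋ Sₙ = ∅` (each step removing
exactly one vertex) such that every set in the sequence cuts at most `m/2 + √(m·Δ) + Δ` edges. -/
theorem downward_sequence_low_degree {V : Type*} [Fintype V] (G : SimpleGraph V)
    (n m Δ : ℕ) (hn : n = Fintype.card V) (hm : m = G.edgeFinset.card)
    (hΔ : ∀ v : V, G.degree v ≤ Δ) :
    ∃ S : ℕ → Finset V,
      S 0 = Finset.univ ∧ S n = ∅ ∧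
      (∀ i < n, ∃ v ∈ S i, S (i + 1) = (S i).erase v) ∧
      (∀ i ≤ n, (cutCard G (S i) : ℝ) ≤ (m : ℝ) / 2 + Real.sqrt (m * Δ) + Δ) := by
  subst hn hm
  set D := min Δ #G.edgeFinset
  have hdeg (v : V) : G.degree v ≤ D := le_min (hΔ v) (G.degree_le_card_edgeFinset v)
  obtain ⟨S, hS0, hSn, hstep, hbal⟩ := exists_downward_sequence (G.IsBalancedCut D)
    (fun _ => G.exists_erase_isBalancedCut hdeg (min_le_right _ _)) univ (G.isBalancedCut_univ D)
  rw [card_univ] at hSn hstep hbal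
  refine ⟨S, hS0, hSn, hstep, fun i hi => ?_⟩
  have hcut : (2 * cutCard G (S i) : ℝ) ≤ #G.edgeFinset + 4 * D := by
    exact_mod_cast G.two_mul_cutCard_le (hbal i hi)
  have hDΔ : (D : ℝ) ≤ Δ := by exact_mod_cast min_le_left _ _
  have hDsqrt : (D : ℝ) ≤ √(#G.edgeFinset * Δ) := by
    rw [Nat.cast_min, min_comm]
    exact min_le_sqrt_mul (by positivity) (by positivity)
  linarith
end

section
/- For any finite simple graph G = (V, E) with m edges in which every vertex has degree at most Δ, there exists a partition V = V₁ ⊎ V₂ such that |E[V₁, V₂]| ≤ m/2 + √m, Σ_{v ∈ V₁} deg_G(v) ≤ m + 2·√(m·Δ), and Σ_{v ∈ V₂} deg_G(v) ≤ m + 2·√(m·Δ). -/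
open Finset
open scoped Classical

section Aux

noncomputable def eps {V : Type*} [Fintype V] (S : Finset V) (v : V) : ℝ :=
  if v ∈ S then -1 else 1

variable {V : Type*} [Fintype V]

lemma eps_sq (S : Finset V) (v : V) : eps S v * eps S v = 1 := by
  unfold eps; split <;> norm_num

lemma sum_prod_eps (c : V → ℕ) (hodd : ∃ v, Odd (c v)) :
    ∑ S : Finset V, ∏ v : V, (eps S v) ^ (c v) = 0 := by
  have h1 : ∀ S : Finset V, (∏ v : V, (eps S v) ^ (c v))
      = ∏ v ∈ S, ((-1:ℝ)) ^ (c v) := by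
    intro S
    have hpt : ∀ v : V, (eps S v) ^ (c v) = if v ∈ S then (-1:ℝ) ^ (c v) else 1 := by
      intro v; unfold eps; split <;> simp
    rw [Finset.prod_congr rfl fun v _ => hpt v, Finset.prod_ite_mem, univ_inter]
  simp only [h1]
  have h2 := Finset.prod_add (fun v : V => ((-1:ℝ)) ^ (c v)) (fun _ => (1:ℝ)) univ
  simp only [Finset.prod_const_one, mul_one, Finset.powerset_univ] at h2
  rw [← h2]
  obtain ⟨v, hv⟩ := hodd
  apply Finset.prod_eq_zero (Finset.mem_univ v)
  rw [hv.neg_one_pow]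
  ring

lemma sum_one_eq : ∑ _S : Finset V, (1:ℝ) = 2 ^ Fintype.card V := by
  simp [Finset.card_univ, Fintype.card_finset]

lemma prod_eps_single (S : Finset V) (a : V) :
    (∏ v : V, (eps S v) ^ (if v = a then 1 else 0)) = eps S a := by
  simp only [pow_ite, pow_one, pow_zero]
  rw [Finset.prod_ite_eq' univ a (fun v => eps S v)]
  simp

lemma sum_eps_two {u v : V} (huv : u ≠ v) :
    ∑ S : Finset V, eps S u * eps S v = 0 := by
  have key := sum_prod_eps (fun w => (if w = u then 1 else 0) + (if w = v then 1 else 0))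
    ⟨u, by simp [huv]⟩
  rw [← key]
  apply Finset.sum_congr rfl
  intro S _
  simp only [pow_add, Finset.prod_mul_distrib, prod_eps_single]

lemma sum_eps_four {a b c d : V} (hab : a ≠ b) (hcd : c ≠ d)
    (hne : s(a, b) ≠ s(c, d)) :
    ∑ S : Finset V, eps S a * eps S b * (eps S c * eps S d) = 0 := by
  have hodd : ∃ v : V, Odd ((if v = a then 1 else 0) + (if v = b then 1 else 0)
      + ((if v = c then 1 else 0) + (if v = d then 1 else 0))) := by
    have hne' : ¬(a = c ∧ b = d ∨ a = d ∧ b = c) := fun h => hne (Sym2.eq_iff.mpr h)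
    push_neg at hne'
    have hne := hne'
    by_cases hac : a = c
    · refine ⟨b, ?_⟩
      have hbd : b ≠ d := fun h => (hne.1 hac h).elim
      simp [hab.symm, hbd, hac ▸ hab.symm]
    · by_cases had : a = d
      · refine ⟨b, ?_⟩
        have hbc : b ≠ c := fun h => (hne.2 had h).elim
        simp [hab.symm, hbc, had ▸ hab.symm]
      · exact ⟨a, by simp [hac, had, hab]⟩
  have key := sum_prod_eps _ hodd
  rw [← key]
  apply Finset.sum_congr rfl
  intro S _
  simp only [pow_add, Finset.prod_mul_distrib, prod_eps_single]

noncomputable def epsE (S : Finset V) : Sym2 V → ℝ :=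
  Sym2.lift ⟨fun u v => eps S u * eps S v, fun u v => by ring⟩

lemma epsE_mk (S : Finset V) (u v : V) : epsE S s(u, v) = eps S u * eps S v := rfl

lemma sum_sq_lin (d : V → ℝ) :
    ∑ S : Finset V, (∑ v : V, d v * eps S v) ^ 2
      = 2 ^ Fintype.card V * ∑ v : V, (d v) ^ 2 := by
  have expand : ∀ S : Finset V, (∑ v : V, d v * eps S v) ^ 2
      = ∑ u : V, ∑ v : V, (d u * d v) * (eps S u * eps S v) := by
    intro S
    rw [sq, Finset.sum_mul_sum]
    exact Finset.sum_congr rfl fun u _ => Finset.sum_congr rfl fun v _ => by ring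
  simp only [expand]
  rw [Finset.sum_comm]
  have inner : ∀ u : V, ∑ v : V, ∑ S : Finset V, (d u * d v) * (eps S u * eps S v)
      = (d u) ^ 2 * 2 ^ Fintype.card V := by
    intro u
    have h : ∀ v : V, ∑ S : Finset V, (d u * d v) * (eps S u * eps S v)
        = if u = v then (d u) ^ 2 * 2 ^ Fintype.card V else 0 := by
      intro v
      by_cases huv : u = v
      · subst huv
        simp only [if_pos rfl, eps_sq, mul_one]
        rw [Finset.sum_const, Finset.card_univ, Fintype.card_finset]
        push_cast
        ring
      · rw [← Finset.mul_sum, sum_eps_two huv, if_neg huv, mul_zero]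
    simp only [h]
    rw [Finset.sum_ite_eq univ u (fun _ => (d u) ^ 2 * 2 ^ Fintype.card V)]
    simp
  have step : ∀ u : V, ∑ S : Finset V, ∑ v : V, (d u * d v) * (eps S u * eps S v)
      = (d u) ^ 2 * 2 ^ Fintype.card V := by
    intro u; rw [Finset.sum_comm]; exact inner u
  rw [Finset.sum_congr rfl fun u _ => step u, ← Finset.sum_mul]
  ring

lemma sum_sq_cut (G : SimpleGraph V) :
    ∑ S : Finset V, (∑ e ∈ G.edgeFinset, epsE S e) ^ 2
      = 2 ^ Fintype.card V * G.edgeFinset.card := by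
  have inner : ∀ e ∈ G.edgeFinset, ∀ e' ∈ G.edgeFinset,
      ∑ S : Finset V, epsE S e * epsE S e'
        = if e = e' then (2:ℝ) ^ Fintype.card V else 0 := by
    intro e he e' he'
    induction e using Sym2.ind with | _ a b =>
    induction e' using Sym2.ind with | _ c d =>
    have hab : a ≠ b := (SimpleGraph.mem_edgeFinset.mp he).ne
    have hcd : c ≠ d := (SimpleGraph.mem_edgeFinset.mp he').ne
    by_cases hee : s(a, b) = s(c, d)
    · rw [if_pos hee, ← hee]
      have : ∀ S : Finset V, epsE S s(a,b) * epsE S s(a,b) = 1 := by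
        intro S
        rw [epsE_mk]
        have h1 := eps_sq S a
        have h2 := eps_sq S b
        nlinarith [h1, h2]
      simp only [this]
      rw [Finset.sum_const, Finset.card_univ, Fintype.card_finset]
      push_cast; ring
    · rw [if_neg hee]
      simp only [epsE_mk]
      exact sum_eps_four hab hcd hee
  have expand : ∀ S : Finset V, (∑ e ∈ G.edgeFinset, epsE S e) ^ 2
      = ∑ e ∈ G.edgeFinset, ∑ e' ∈ G.edgeFinset, epsE S e * epsE S e' := by
    intro S; rw [sq, Finset.sum_mul_sum]
  simp only [expand]
  rw [Finset.sum_comm]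
  have step : ∀ e ∈ G.edgeFinset,
      ∑ S : Finset V, ∑ e' ∈ G.edgeFinset, epsE S e * epsE S e'
        = (2:ℝ) ^ Fintype.card V := by
    intro e he
    rw [Finset.sum_comm]
    rw [Finset.sum_congr rfl (fun e' he' => inner e he e' he')]
    rw [Finset.sum_ite_eq G.edgeFinset e (fun _ => (2:ℝ) ^ Fintype.card V)]
    simp [he]
  rw [Finset.sum_congr rfl step, Finset.sum_const]
  push_cast; ring

lemma cut_eq (G : SimpleGraph V) (S : Finset V) :
    ((G.edgeFinset.filter fun e => (∃ u ∈ e, u ∈ S) ∧ ∃ v ∈ e, v ∉ S).card : ℝ)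
      = ((G.edgeFinset.card : ℝ) - ∑ e ∈ G.edgeFinset, epsE S e) / 2 := by
  have per : ∀ e ∈ G.edgeFinset,
      (if ((∃ u ∈ e, u ∈ S) ∧ ∃ v ∈ e, v ∉ S) then (1:ℝ) else 0)
        = (1 - epsE S e) / 2 := by
    intro e he
    induction e using Sym2.ind with | _ a b =>
    have hab : a ≠ b := (SimpleGraph.mem_edgeFinset.mp he).ne
    rw [epsE_mk]
    by_cases ha : a ∈ S <;> by_cases hb : b ∈ S <;>
      simp [eps, Sym2.mem_iff, ha, hb, hab] <;> norm_num
  rw [Finset.card_filter]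
  push_cast
  rw [Finset.sum_congr rfl per, ← Finset.sum_div, Finset.sum_sub_distrib,
    Finset.sum_const]
  push_cast; ring

lemma lin_eq (d : V → ℝ) (S : Finset V) :
    ∑ v : V, d v * eps S v = ∑ v : V, d v - 2 * ∑ v ∈ S, d v := by
  have hpt : ∀ v : V, d v * eps S v = d v - 2 * (if v ∈ S then d v else 0) := by
    intro v; unfold eps; split <;> ring
  rw [Finset.sum_congr rfl fun v _ => hpt v, Finset.sum_sub_distrib, ← Finset.mul_sum]
  congr 1
  rw [Finset.sum_ite_mem, univ_inter]

end Aux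

/-- For any finite simple graph `G` with `m` edges and maximum degree at most `Δ`,
there is a partition `V = V₁ ⊎ V₂` (given by `V₁` and its complement) such that
`|E[V₁, V₂]| ≤ m/2 + √m` and both parts carry total degree at most `m + 2√(m·Δ)`. -/
theorem balanced_partition_exists {V : Type*} [Fintype V] (G : SimpleGraph V)
    (m Δ : ℕ) (hm : m = G.edgeFinset.card) (hΔ : ∀ v : V, G.degree v ≤ Δ) :
    ∃ V₁ : Finset V,
      (cutCard G V₁ : ℝ) ≤ (m : ℝ) / 2 + Real.sqrt m ∧
      ((∑ v ∈ V₁, G.degree v : ℕ) : ℝ) ≤ (m : ℝ) + 2 * Real.sqrt (m * Δ) ∧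
      ((∑ v ∈ V₁ᶜ, G.degree v : ℕ) : ℝ) ≤ (m : ℝ) + 2 * Real.sqrt (m * Δ) := by
  by_cases hm0 : m = 0
  · subst hm0
    have hE : G.edgeFinset = ∅ := Finset.card_eq_zero.mp hm.symm
    have hdeg : ∀ v : V, G.degree v = 0 := by
      intro v
      by_contra h
      obtain ⟨w, hw⟩ := (G.degree_pos_iff_exists_adj v).mp (Nat.pos_of_ne_zero h)
      have : s(v, w) ∈ G.edgeFinset := SimpleGraph.mem_edgeFinset.mpr hw
      simp [hE] at this
    refine ⟨∅, ?_, ?_, ?_⟩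
    · unfold cutCard
      simp [hE]
    · simp
    · simp [hdeg]
  -- main case
  have hmpos : 0 < m := Nat.pos_of_ne_zero hm0
  have hΔpos : 0 < Δ := by
    obtain ⟨e, he⟩ := Finset.card_pos.mp (hm ▸ hmpos)
    induction e using Sym2.ind with | _ a b =>
    have hadj : G.Adj a b := SimpleGraph.mem_edgeFinset.mp he
    have : 0 < G.degree a := (G.degree_pos_iff_exists_adj a).mpr ⟨b, hadj⟩
    exact lt_of_lt_of_le this (hΔ a)
  have hmR : (0:ℝ) < m := by exact_mod_cast hmpos
  have hΔR : (0:ℝ) < Δ := by exact_mod_cast hΔpos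
  set n := Fintype.card V with hn
  set d : V → ℝ := fun v => (G.degree v : ℝ) with hd
  have hsum : ∑ v : V, d v = 2 * m := by
    simp only [hd]
    rw [← Nat.cast_sum]
    rw [SimpleGraph.sum_degrees_eq_twice_card_edges, hm]
    push_cast; ring
  have hd2 : ∑ v : V, (d v) ^ 2 ≤ 2 * m * Δ := by
    have hptw : ∀ v : V, (d v) ^ 2 ≤ (Δ : ℝ) * d v := by
      intro v
      have h1 : d v ≤ (Δ : ℝ) := by simp only [hd]; exact_mod_cast hΔ v
      have h2 : (0:ℝ) ≤ d v := by positivity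
      nlinarith
    calc ∑ v : V, (d v) ^ 2 ≤ ∑ v : V, (Δ : ℝ) * d v :=
          Finset.sum_le_sum fun v _ => hptw v
      _ = (Δ : ℝ) * ∑ v : V, d v := by rw [Finset.mul_sum]
      _ = 2 * m * Δ := by rw [hsum]; ring
  -- main existence
  have hlt : ∑ S : Finset V,
      ((∑ e ∈ G.edgeFinset, epsE S e) ^ 2 / (4 * m)
        + (∑ v : V, d v * eps S v) ^ 2 / (16 * m * Δ))
      < ∑ S : Finset V, (1:ℝ) := by
    rw [Finset.sum_add_distrib, ← Finset.sum_div, ← Finset.sum_div,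
      sum_sq_cut, sum_sq_lin, sum_one_eq]
    have hNpos : (0:ℝ) < 2 ^ n := by positivity
    have hcardm : ((G.edgeFinset.card : ℕ) : ℝ) = (m : ℝ) := by rw [hm]
    rw [hcardm]
    have e2 : (2:ℝ) ^ n * m / (4 * m) = 2 ^ n / 4 := by field_simp
    have e3 : (2:ℝ) ^ n * (∑ v : V, (d v) ^ 2) / (16 * m * Δ) ≤ 2 ^ n / 8 := by
      rw [div_le_div_iff₀ (by positivity) (by norm_num)]
      nlinarith [hd2, hNpos]
    rw [e2]
    linarith
  obtain ⟨S, _, hS⟩ := Finset.exists_lt_of_sum_lt hlt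
  set g := ∑ e ∈ G.edgeFinset, epsE S e with hg
  set f := ∑ v : V, d v * eps S v with hf
  have hg2 : g ^ 2 < 4 * m := by
    have h2 : (0:ℝ) ≤ f ^ 2 / (16 * m * Δ) := by positivity
    have h1 : g ^ 2 / (4 * m) < 1 := by linarith
    have := (div_lt_one (by positivity : (0:ℝ) < 4 * m)).mp h1
    linarith
  have hf2 : f ^ 2 < 16 * m * Δ := by
    have h2 : (0:ℝ) ≤ g ^ 2 / (4 * m) := by positivity
    have h1 : f ^ 2 / (16 * m * Δ) < 1 := by linarith
    have := (div_lt_one (by positivity : (0:ℝ) < 16 * m * Δ)).mp h1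
    linarith
  have hgabs : |g| ≤ 2 * Real.sqrt m := by
    rw [← Real.sqrt_sq_eq_abs]
    calc Real.sqrt (g ^ 2) ≤ Real.sqrt (4 * m) := Real.sqrt_le_sqrt hg2.le
      _ = 2 * Real.sqrt m := by
          rw [show (4:ℝ) * m = 2 ^ 2 * m by ring, Real.sqrt_mul (by positivity),
            Real.sqrt_sq (by norm_num : (0:ℝ) ≤ 2)]
  have hfabs : |f| ≤ 4 * Real.sqrt ((m : ℝ) * Δ) := by
    rw [← Real.sqrt_sq_eq_abs]
    calc Real.sqrt (f ^ 2) ≤ Real.sqrt (16 * m * Δ) := Real.sqrt_le_sqrt hf2.le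
      _ = 4 * Real.sqrt ((m : ℝ) * Δ) := by
          rw [show (16:ℝ) * m * Δ = 4 ^ 2 * ((m:ℝ) * Δ) by ring,
            Real.sqrt_mul (by positivity), Real.sqrt_sq (by norm_num : (0:ℝ) ≤ 4)]
  have hlinS : ∑ v ∈ S, d v = m - f / 2 := by
    have := lin_eq d S
    rw [← hf, hsum] at this
    linarith
  have hlinSc : ∑ v ∈ Sᶜ, d v = m + f / 2 := by
    have hcompl : ∑ v ∈ S, d v + ∑ v ∈ Sᶜ, d v = ∑ v : V, d v :=
      Finset.sum_add_sum_compl S d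
    rw [hsum, hlinS] at hcompl
    linarith
  refine ⟨S, ?_, ?_, ?_⟩
  · show ((G.edgeFinset.filter fun e => (∃ u ∈ e, u ∈ S) ∧ ∃ v ∈ e, v ∉ S).card : ℝ) ≤ _
    rw [cut_eq G S, ← hg, show ((G.edgeFinset.card : ℕ) : ℝ) = (m:ℝ) by rw [hm]]
    have h1 : -(2 * Real.sqrt m) ≤ g := (neg_abs_le g).trans' (by linarith [hgabs])
    linarith
  · have hcast : ((∑ v ∈ S, G.degree v : ℕ) : ℝ) = ∑ v ∈ S, d v := by
      push_cast [hd]; rfl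
    rw [hcast, hlinS]
    have h1 : -(4 * Real.sqrt ((m:ℝ) * Δ)) ≤ f := (neg_abs_le f).trans' (by linarith [hfabs])
    push_cast
    linarith
  · have hcast : ((∑ v ∈ Sᶜ, G.degree v : ℕ) : ℝ) = ∑ v ∈ Sᶜ, d v := by
      push_cast [hd]; rfl
    rw [hcast, hlinSc]
    have h1 : f ≤ 4 * Real.sqrt ((m:ℝ) * Δ) := (le_abs_self f).trans hfabs
    push_cast
    linarith
end

section
/- Let γ, ε > 0 and let G = (X ⊎ Y, E) be a bi-regular bipartite graph that is a (γ, ε)-extractor graph. Then for every X' ⊆ X and Y' ⊆ Y, | |E[X', Y']|/|E| − (|X'|·|Y'|)/(|X|·|Y|) | ≤ γ + ε. -/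
open Finset
open scoped Classical

set_option maxHeartbeats 1000000 in
/-- mixing lemma for extractors: Let `G` be a bi-regular bipartite graph on
parts `X` and `Y` (edge relation `R`, left-degree `dX ≥ 1`, right-degree `dY ≥ 1`) which is a
`(γ, ε)`-extractor graph: for every distribution `P` on `X` with `P(x) ≤ 1/(γ·|X|)` for all `x`,
the total variation distance between `G ∘ P` and the uniform distribution on `Y` is at most `ε`.
Then for every `X' ⊆ X` and `Y' ⊆ Y`,
`| |E[X', Y']|/|E| − |X'|·|Y'|/(|X|·|Y|) | ≤ γ + ε`. -/
theorem extractor_mixing {X Y : Type*} [Fintype X] [Fintype Y]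
    (R : X → Y → Prop) (dX dY : ℕ) (hdX1 : 1 ≤ dX) (hdY1 : 1 ≤ dY)
    (hdX : ∀ x, (Finset.univ.filter fun y => R x y).card = dX)
    (hdY : ∀ y, (Finset.univ.filter fun x => R x y).card = dY)
    (γ ε : ℝ) (hγ : 0 < γ) (hε : 0 < ε)
    (hext : ∀ P : X → ℝ, (∀ x, 0 ≤ P x) → (∑ x, P x) = 1 →
      (∀ x, P x ≤ 1 / (γ * (Fintype.card X : ℝ))) →
      (1 / 2) * ∑ y, |(∑ x, if R x y then P x else 0) / (dX : ℝ)
          - 1 / (Fintype.card Y : ℝ)| ≤ ε) :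
    ∀ (X' : Finset X) (Y' : Finset Y),
      |((Finset.univ.filter fun p : X × Y => R p.1 p.2 ∧ p.1 ∈ X' ∧ p.2 ∈ Y').card : ℝ) /
            ((Finset.univ.filter fun p : X × Y => R p.1 p.2).card : ℝ)
          - ((X'.card : ℝ) * (Y'.card : ℝ)) /
            ((Fintype.card X : ℝ) * (Fintype.card Y : ℝ))| ≤ γ + ε := by
  intro X' Y'
  -- total edge counts
  have hE : (univ.filter fun p : X × Y => R p.1 p.2).card = Fintype.card X * dX := by
    rw [Finset.card_filter, Fintype.sum_prod_type]
    have h : ∀ x : X, (∑ y, if R x y then (1:ℕ) else 0) = dX := by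
      intro x; rw [← Finset.card_filter]; exact hdX x
    simp [h, Finset.card_univ]
  have hE' : (univ.filter fun p : X × Y => R p.1 p.2).card = Fintype.card Y * dY := by
    rw [Finset.card_filter, Fintype.sum_prod_type_right]
    have h : ∀ y : Y, (∑ x, if R x y then (1:ℕ) else 0) = dY := by
      intro y; rw [← Finset.card_filter]; exact hdY y
    simp [h, Finset.card_univ]
  -- degenerate case : X empty
  by_cases hX0 : Fintype.card X = 0
  · have hXe : IsEmpty X := Fintype.card_eq_zero_iff.mp hX0
    have hY0 : Fintype.card Y = 0 := by
      by_contra hY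
      obtain ⟨y⟩ := Fintype.card_pos_iff.mp (Nat.pos_of_ne_zero hY)
      have h := hdY y
      rw [Finset.univ_eq_empty] at h
      simp at h
      omega
    have hYe : IsEmpty Y := Fintype.card_eq_zero_iff.mp hY0
    have hXr : ((Fintype.card X : ℝ)) = 0 := by exact_mod_cast hX0
    have hYr : ((Fintype.card Y : ℝ)) = 0 := by exact_mod_cast hY0
    rw [hXr, hYr]
    simp only [Finset.univ_eq_empty, Finset.filter_empty, Finset.card_empty,
      Nat.cast_zero, zero_div, zero_mul, div_zero, sub_zero, abs_zero]
    positivity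
  -- now X is nonempty
  have hn1 : 1 ≤ Fintype.card X := Nat.one_le_iff_ne_zero.mpr hX0
  have hm1 : 1 ≤ Fintype.card Y := by
    by_contra hm
    have : Fintype.card Y = 0 := by omega
    rw [hE', this, zero_mul] at hE
    have : 1 ≤ Fintype.card X * dX := Nat.one_le_iff_ne_zero.mpr (by positivity)
    omega
  set n : ℝ := (Fintype.card X : ℝ) with hn
  set m : ℝ := (Fintype.card Y : ℝ) with hm
  have hnpos : (0:ℝ) < n := by rw [hn]; exact_mod_cast hn1
  have hmpos : (0:ℝ) < m := by rw [hm]; exact_mod_cast hm1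
  have hdXpos : (0:ℝ) < (dX:ℝ) := by exact_mod_cast hdX1
  -- edge counts as reals
  have hEr : ((univ.filter fun p : X × Y => R p.1 p.2).card : ℝ) = n * dX := by
    rw [hE]; push_cast; ring
  -- fiberwise counting
  have hEXY : (univ.filter fun p : X × Y => R p.1 p.2 ∧ p.1 ∈ X' ∧ p.2 ∈ Y').card
      = ∑ y ∈ Y', (X'.filter fun x => R x y).card := by
    rw [Finset.card_filter, Fintype.sum_prod_type_right]
    have step : ∀ y : Y, (∑ x, if R x y ∧ x ∈ X' ∧ y ∈ Y' then (1:ℕ) else 0)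
        = if y ∈ Y' then (X'.filter fun x => R x y).card else 0 := by
      intro y
      by_cases hy : y ∈ Y'
      · simp only [hy, if_true, and_true]
        rw [Finset.card_filter]
        rw [show (∑ x : X, if R x y ∧ x ∈ X' then (1:ℕ) else 0)
            = ∑ x : X, if x ∈ X' then (if R x y then 1 else 0) else 0 by
          refine Finset.sum_congr rfl fun x _ => ?_
          by_cases h1 : R x y <;> by_cases h2 : x ∈ X' <;> simp [h1, h2]]
        rw [Finset.sum_ite_mem, Finset.univ_inter, ← Finset.card_filter]
      · simp [hy]
    rw [Finset.sum_congr rfl fun y _ => step y]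
    rw [Finset.sum_ite_mem, Finset.univ_inter]
  have hFsum : ∑ y, ((X'.filter fun x => R x y).card) = X'.card * dX := by
    simp only [Finset.card_filter]
    rw [Finset.sum_comm]
    have h : ∀ x : X, (∑ y, if R x y then (1:ℕ) else 0) = dX := by
      intro x; rw [← Finset.card_filter]; exact hdX x
    simp [h]
  set c : ℝ := (X'.card : ℝ) with hc
  set e : ℝ := ((univ.filter fun p : X × Y => R p.1 p.2 ∧ p.1 ∈ X' ∧ p.2 ∈ Y').card : ℝ) with he
  have hcn : c ≤ n := by rw [hc, hn]; exact_mod_cast Finset.card_le_univ X'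
  have hcpos0 : (0:ℝ) ≤ c := by positivity
  have hepos : (0:ℝ) ≤ e := by positivity
  have heY : e = ∑ y ∈ Y', ((X'.filter fun x => R x y).card : ℝ) := by
    rw [he, hEXY]; push_cast; ring
  have heub : e ≤ c * dX := by
    rw [heY]
    calc ∑ y ∈ Y', ((X'.filter fun x => R x y).card : ℝ)
        ≤ ∑ y, ((X'.filter fun x => R x y).card : ℝ) :=
          Finset.sum_le_sum_of_subset_of_nonneg (Finset.subset_univ _)
            (fun _ _ _ => by positivity)
      _ = c * dX := by rw [← Nat.cast_sum, hFsum]; push_cast; ring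
  have hYub : (Y'.card : ℝ) ≤ m := by rw [hm]; exact_mod_cast Finset.card_le_univ Y'
  have hYpos : (0:ℝ) ≤ (Y'.card : ℝ) := by positivity
  rw [hEr]
  by_cases hsmall : c < γ * n
  · -- both quantities are at most c/n < γ
    rw [abs_le]
    constructor
    · have h1 : e / (n * dX) ≥ 0 := by positivity
      have h2 : c * (Y'.card : ℝ) / (n * m) ≤ c / n := by
        rw [div_le_div_iff₀ (by positivity) hnpos]
        nlinarith [mul_le_mul_of_nonneg_right (mul_le_mul_of_nonneg_left hYub hcpos0) hnpos.le]
      have h3 : c / n < γ := by rw [div_lt_iff₀ hnpos]; exact hsmall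
      linarith
    · have h1 : c * (Y'.card : ℝ) / (n * m) ≥ 0 := by positivity
      have h2 : e / (n * dX) ≤ c / n := by
        rw [div_le_div_iff₀ (by positivity) hnpos]
        nlinarith [mul_le_mul_of_nonneg_right heub hnpos.le]
      have h3 : c / n < γ := by rw [div_lt_iff₀ hnpos]; exact hsmall
      linarith
  -- main case
  push_neg at hsmall
  have hcpos : (0:ℝ) < c := lt_of_lt_of_le (by positivity) hsmall
  set P : X → ℝ := fun x => if x ∈ X' then 1/c else 0 with hP
  have hP0 : ∀ x, 0 ≤ P x := by
    intro x; rw [hP]; dsimp only; split <;> positivity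
  have hP1 : (∑ x, P x) = 1 := by
    rw [hP]
    rw [Finset.sum_ite_mem, Finset.univ_inter, Finset.sum_const]
    rw [nsmul_eq_mul, mul_one_div, div_self hcpos.ne']
  have hPb : ∀ x, P x ≤ 1 / (γ * n) := by
    intro x; rw [hP]; dsimp only
    have : 1/c ≤ 1/(γ*n) := by
      apply one_div_le_one_div_of_le (by positivity) hsmall
    split
    · exact this
    · positivity
  have H := hext P hP0 hP1 hPb
  -- simplify the inner sums
  have hinner : ∀ y : Y, (∑ x, if R x y then P x else 0)
      = ((X'.filter fun x => R x y).card : ℝ) / c := by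
    intro y
    rw [show (∑ x, if R x y then P x else 0)
        = ∑ x, if x ∈ X'.filter (fun x => R x y) then 1/c else 0 by
      refine Finset.sum_congr rfl fun x _ => ?_
      by_cases h1 : R x y <;> by_cases h2 : x ∈ X' <;>
        simp [hP, h1, h2, Finset.mem_filter]]
    rw [Finset.sum_ite_mem, Finset.univ_inter, Finset.sum_const, nsmul_eq_mul]
    ring
  simp only [hinner] at H
  -- the half-sum trick
  set g : Y → ℝ := fun y => ((X'.filter fun x => R x y).card : ℝ) / (c * dX) - 1/m with hg
  have Hg : (1/2) * ∑ y, |g y| ≤ ε := by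
    refine le_trans (le_of_eq ?_) H
    congr 1
    refine Finset.sum_congr rfl fun y _ => ?_
    rw [hg]; dsimp only
    rw [div_div]
  have hgsum : ∑ y, g y = 0 := by
    rw [hg]
    dsimp only
    rw [Finset.sum_sub_distrib, ← Finset.sum_div, ← Nat.cast_sum, hFsum]
    rw [Finset.sum_const, nsmul_eq_mul, Finset.card_univ]
    push_cast
    rw [← hc, ← hm]
    rw [div_self (mul_pos hcpos hdXpos).ne', mul_one_div, div_self hmpos.ne', sub_self]
  have hsplit : ∑ y ∈ Y', g y + ∑ y ∈ Y'ᶜ, g y = 0 := by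
    rw [Finset.sum_add_sum_compl, hgsum]
  have habs : |∑ y ∈ Y', g y| ≤ ε := by
    have h1 : |∑ y ∈ Y', g y| ≤ ∑ y ∈ Y', |g y| := Finset.abs_sum_le_sum_abs _ _
    have h2 : |∑ y ∈ Y', g y| = |∑ y ∈ Y'ᶜ, g y| := by
      rw [eq_neg_of_add_eq_zero_left hsplit, abs_neg]
    have h3 : |∑ y ∈ Y'ᶜ, g y| ≤ ∑ y ∈ Y'ᶜ, |g y| := Finset.abs_sum_le_sum_abs _ _
    have h4 : ∑ y ∈ Y', |g y| + ∑ y ∈ Y'ᶜ, |g y| = ∑ y, |g y| :=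
      Finset.sum_add_sum_compl _ _
    linarith
  have hA : ∑ y ∈ Y', g y = e / (c * dX) - (Y'.card : ℝ) / m := by
    rw [hg]
    dsimp only
    rw [Finset.sum_sub_distrib, ← Finset.sum_div, ← Nat.cast_sum, ← hEXY]
    rw [Finset.sum_const, nsmul_eq_mul]
    rw [he]
    ring
  -- conclude
  have hfinal : e / (n * dX) - c * (Y'.card : ℝ) / (n * m) = (c / n) * ∑ y ∈ Y', g y := by
    rw [hA]
    field_simp
  rw [hfinal, abs_mul]
  have h5 : |c / n| ≤ 1 := by
    rw [abs_of_nonneg (by positivity)]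
    rw [div_le_one hnpos]; exact hcn
  have h6 : (0:ℝ) ≤ |∑ y ∈ Y', g y| := abs_nonneg _
  nlinarith
end

section
/- Let γ, ε > 0 and let G = (X ⊎ Y, E) be a bi-regular bipartite graph that is a (γ, ε)-extractor graph. Then G is 4(γ + ε)-balanced: for every partition of V = X ⊎ Y into V₁ ⊎ V₂ with |V₁|, |V₂| ≤ ⌈|V|/2⌉, we have |E[V₁]| + |E[V₂]| ≤ (1 + 4(γ + ε))·|E|/2. -/
open Finset
open scoped Classical

lemma half_abs_sum' {α : Type*} [Fintype α] (f : α → ℝ) (h : ∑ x, f x = 0)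
    (s : Finset α) : |∑ x ∈ s, f x| ≤ (1/2) * ∑ x, |f x| := by
  have h1 : ∑ x ∈ s, f x + ∑ x ∈ sᶜ, f x = 0 := by
    rw [Finset.sum_add_sum_compl]; exact h
  have h2 : ∑ x, |f x| = ∑ x ∈ s, |f x| + ∑ x ∈ sᶜ, |f x| :=
    (Finset.sum_add_sum_compl s _).symm
  have h3 : |∑ x ∈ s, f x| ≤ ∑ x ∈ s, |f x| := Finset.abs_sum_le_sum_abs _ _
  have h4 : |∑ x ∈ sᶜ, f x| ≤ ∑ x ∈ sᶜ, |f x| := Finset.abs_sum_le_sum_abs _ _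
  have h5 : |∑ x ∈ s, f x| = |∑ x ∈ sᶜ, f x| := by
    rw [show ∑ x ∈ s, f x = -∑ x ∈ sᶜ, f x by linarith, abs_neg]
  linarith

lemma int_prod_nonpos (n m s t : ℤ) (h1 : 2*(s+t) ≤ n+m+1) (h2 : n+m ≤ 2*(s+t)+1) :
    (2*s-n)*(2*t-m) ≤ 0 := by
  rcases lt_trichotomy (2*s-n) 0 with h|h|h
  · exact mul_nonpos_of_nonpos_of_nonneg h.le (by omega)
  · simp [h]
  · exact mul_nonpos_of_nonneg_of_nonpos (by omega) (by omega)

lemma caseB_real (n m s t γ ε : ℝ) (hn : 1 ≤ n) (hm : 1 ≤ m) (hγ : 0 < γ) (hε : 0 < ε)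
    (h4 : γ + ε < 1/4) (hs0 : 0 ≤ s) (hsγ : s ≤ γ*n) (ht0 : 0 ≤ t) (htm : t ≤ m)
    (hbal : n + m - 1 ≤ 2*(s+t)) :
    n*(1/2 - 2*γ - 2*ε) ≤ (n - s)*(t/m - ε) := by
  have hm0 : (0:ℝ) < m := by linarith
  have key : n*(1/2-2*γ-2*ε)*m ≤ (n-s)*(t-ε*m) := by
    linarith [mul_nonneg (by linarith : (0:ℝ) ≤ n) (by linarith : (0:ℝ) ≤ 2*(s+t)-(n+m-1)),
      mul_nonneg (by linarith : (0:ℝ) ≤ γ*n - s) ht0,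
      mul_nonneg hγ.le (mul_nonneg (by linarith : (0:ℝ) ≤ n) (by linarith : (0:ℝ) ≤ m - t)),
      mul_nonneg (by linarith : (0:ℝ) ≤ n) (by linarith : (0:ℝ) ≤ γ*n - s),
      mul_nonneg (mul_nonneg (by linarith : (0:ℝ) ≤ n) (by linarith : (0:ℝ) ≤ n-1))
        (by linarith : (0:ℝ) ≤ 1/2 - γ),
      mul_nonneg hγ.le (mul_nonneg (by linarith : (0:ℝ) ≤ n) (by linarith : (0:ℝ) ≤ m-1)),
      mul_nonneg hε.le (mul_nonneg (by linarith : (0:ℝ) ≤ n) (by linarith : (0:ℝ) ≤ m)),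
      mul_nonneg hε.le (mul_nonneg hs0 (by linarith : (0:ℝ) ≤ m))]
  have heq : (n-s)*(t/m-ε) = (n-s)*(t-ε*m)/m := by
    field_simp
  rw [heq, le_div_iff₀ hm0]; exact key

lemma count_pairs {X Y : Type*} [Fintype X] [Fintype Y]
    (R : X → Y → Prop) (A : X → Prop) (B : Y → Prop)
    [DecidablePred A] [DecidablePred B]
    [DecidablePred fun p : X × Y => R p.1 p.2 ∧ A p.1 ∧ B p.2]
    [∀ x y, Decidable (R x y)] :
    (((Finset.univ.filter fun p : X × Y => R p.1 p.2 ∧ A p.1 ∧ B p.2).card) : ℝ)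
      = ∑ x ∈ Finset.univ.filter A, ∑ y ∈ Finset.univ.filter B,
          if R x y then (1:ℝ) else 0 := by
  rw [← Finset.sum_boole, Fintype.sum_prod_type, Finset.sum_filter]
  refine Finset.sum_congr rfl fun x _ => ?_
  by_cases hA : A x
  · rw [if_pos hA, Finset.sum_filter]
    refine Finset.sum_congr rfl fun y _ => ?_
    by_cases hB : B y <;> by_cases hR : R x y <;> simp [hA, hB, hR]
  · rw [if_neg hA]
    simp [hA]

lemma count_all {X Y : Type*} [Fintype X] [Fintype Y] (R : X → Y → Prop) :
    (((Finset.univ.filter fun p : X × Y => R p.1 p.2).card) : ℝ)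
      = ∑ x : X, ∑ y : Y, if R x y then (1:ℝ) else 0 := by
  classical
  rw [← Finset.sum_boole, Fintype.sum_prod_type]

lemma deg_sum' {X Y : Type*} [Fintype X] [Fintype Y] (R : X → Y → Prop) (dX : ℕ)
    (hdX : ∀ x, (Finset.univ.filter fun y => R x y).card = dX) (x : X) :
    ∑ y : Y, (if R x y then (1:ℝ) else 0) = dX := by
  rw [Finset.sum_boole, hdX]

lemma scal_swap {X Y : Type*} (S : Finset X) (T : Finset Y) (g : X → Y → ℝ) (c d : ℝ) :
    ∑ y ∈ T, (c * ∑ x ∈ S, g x y) / d = (c / d) * ∑ x ∈ S, ∑ y ∈ T, g x y := by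
  simp_rw [Finset.mul_sum, Finset.sum_div]
  rw [Finset.sum_comm]
  exact Finset.sum_congr rfl fun x _ => Finset.sum_congr rfl fun y _ => by ring

lemma mix_lemma {X Y : Type*} [Fintype X] [Fintype Y]
    (R : X → Y → Prop) (dX : ℕ) (hdX1 : 1 ≤ dX)
    (hdX : ∀ x, (Finset.univ.filter fun y => R x y).card = dX)
    (γ ε : ℝ) (hγ : 0 < γ)
    (hext : ∀ P : X → ℝ, (∀ x, 0 ≤ P x) → (∑ x, P x) = 1 →
      (∀ x, P x ≤ 1 / (γ * (Fintype.card X : ℝ))) →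
      (1 / 2) * ∑ y, |(∑ x, if R x y then P x else 0) / (dX : ℝ)
          - 1 / (Fintype.card Y : ℝ)| ≤ ε)
    (S : Finset X) (hS : S.Nonempty) (hSγ : γ * Fintype.card X ≤ S.card)
    (T : Finset Y) :
    (S.card : ℝ) * dX * ((T.card : ℝ) / (Fintype.card Y : ℝ) - ε)
      ≤ ∑ x ∈ S, ∑ y ∈ T, if R x y then (1:ℝ) else 0 := by
  classical
  obtain ⟨x₀, hx₀⟩ := hS
  have hm1 : 1 ≤ Fintype.card Y := by
    have h := hdX x₀
    have hne : (Finset.univ.filter fun y => R x₀ y).Nonempty := by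
      rw [← Finset.card_pos, h]; omega
    obtain ⟨y₀, _⟩ := hne
    exact Fintype.card_pos_iff.mpr ⟨y₀⟩
  set m : ℝ := (Fintype.card Y : ℝ) with hmdef
  have hm0 : (0:ℝ) < m := by rw [hmdef]; exact_mod_cast hm1
  have hS0 : (0:ℝ) < S.card := by exact_mod_cast Finset.card_pos.mpr ⟨x₀, hx₀⟩
  have hdX0 : (0:ℝ) < dX := by exact_mod_cast hdX1
  have hn1 : 1 ≤ Fintype.card X := Fintype.card_pos_iff.mpr ⟨x₀⟩
  have hγn : (0:ℝ) < γ * Fintype.card X := by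
    apply mul_pos hγ; exact_mod_cast hn1
  set c : ℝ := (S.card : ℝ)⁻¹ with hc
  have hc0 : 0 < c := inv_pos.mpr hS0
  set P : X → ℝ := fun x => if x ∈ S then c else 0 with hP
  have hP0 : ∀ x, 0 ≤ P x := fun x => by
    by_cases h : x ∈ S <;> simp [hP, h, hc0.le]
  have hPsum : ∑ x, P x = 1 := by
    simp only [hP, Finset.sum_ite_mem, Finset.univ_inter, Finset.sum_const, nsmul_eq_mul]
    exact mul_inv_cancel₀ (ne_of_gt hS0)
  have hPle : ∀ x, P x ≤ 1 / (γ * (Fintype.card X : ℝ)) := by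
    intro x
    by_cases h : x ∈ S
    · simp only [hP, if_pos h, hc]
      rw [one_div]
      exact inv_anti₀ hγn hSγ
    · simp only [hP, if_neg h]
      positivity
  have htv := hext P hP0 hPsum hPle
  have hq : ∀ y, (∑ x, if R x y then P x else 0)
      = c * (∑ x ∈ S, if R x y then (1:ℝ) else 0) := by
    intro y
    rw [Finset.mul_sum]
    rw [show ∑ x ∈ S, c * (if R x y then (1:ℝ) else 0)
        = ∑ x, (if x ∈ S then c * (if R x y then (1:ℝ) else 0) else 0) by
      rw [Finset.sum_ite_mem, Finset.univ_inter]]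
    refine Finset.sum_congr rfl fun x _ => ?_
    by_cases h : x ∈ S <;> by_cases hR : R x y <;> simp [hP, h, hR]
  have hrow : ∑ x ∈ S, ∑ y, (if R x y then (1:ℝ) else 0) = (S.card : ℝ) * dX := by
    rw [Finset.sum_congr rfl fun x _ => deg_sum' R dX hdX x, Finset.sum_const, nsmul_eq_mul]
  have hqsum : ∑ y, (∑ x, if R x y then P x else 0) / (dX:ℝ) = 1 := by
    simp only [hq]
    rw [scal_swap, hrow, hc]
    field_simp
  have hsum0 : ∑ y, ((∑ x, if R x y then P x else 0) / (dX:ℝ) - 1/m) = 0 := by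
    rw [Finset.sum_sub_distrib, hqsum, Finset.sum_const, Finset.card_univ, nsmul_eq_mul]
    rw [mul_one_div, div_self (ne_of_gt hm0)]
    ring
  have habs := half_abs_sum' _ hsum0 T
  have habs2 : |∑ y ∈ T, ((∑ x, if R x y then P x else 0) / (dX:ℝ) - 1/m)| ≤ ε :=
    le_trans habs htv
  have hsplit : ∑ y ∈ T, ((∑ x, if R x y then P x else 0) / (dX:ℝ) - 1/m)
      = (∑ y ∈ T, (∑ x, if R x y then P x else 0) / (dX:ℝ)) - (T.card : ℝ)/m := by
    rw [Finset.sum_sub_distrib, Finset.sum_const, nsmul_eq_mul, mul_one_div]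
  have h1 : (T.card:ℝ)/m - ε ≤ ∑ y ∈ T, (∑ x, if R x y then P x else 0) / (dX:ℝ) := by
    have := (abs_le.mp habs2).1
    rw [hsplit] at this
    linarith
  have hEq : ∑ y ∈ T, (∑ x, if R x y then P x else 0) / (dX:ℝ)
      = (c/dX) * ∑ x ∈ S, ∑ y ∈ T, (if R x y then (1:ℝ) else 0) := by
    simp only [hq]
    exact scal_swap S T _ c dX
  have hpos : (0:ℝ) ≤ (S.card:ℝ) * dX := by positivity
  calc (S.card : ℝ) * dX * ((T.card : ℝ) / m - ε)
      ≤ (S.card : ℝ) * dX * ∑ y ∈ T, (∑ x, if R x y then P x else 0) / (dX:ℝ) :=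
        mul_le_mul_of_nonneg_left h1 hpos
    _ = ∑ x ∈ S, ∑ y ∈ T, (if R x y then (1:ℝ) else 0) := by
        rw [hEq, hc]
        field_simp
set_option maxHeartbeats 1600000 in
/-- extractors are balanced: Let `G` be a bi-regular bipartite graph on parts
`X` and `Y` (edge relation `R`, left-degree `dX ≥ 1`, right-degree `dY ≥ 1`) that is a
`(γ, ε)`-extractor graph. Then `G` is `4(γ + ε)`-balanced: for every partition of the vertex
set `V = X ⊎ Y` into `V₁ ⊎ V₂` with `|V₁|, |V₂| ≤ ⌈|V|/2⌉`, the number of edges with both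
endpoints inside `V₁` plus the number with both endpoints inside `V₂` is at most
`(1 + 4(γ + ε))·|E|/2`. -/
theorem extractor_is_balanced {X Y : Type*} [Fintype X] [Fintype Y]
    (R : X → Y → Prop) (dX dY : ℕ) (hdX1 : 1 ≤ dX) (hdY1 : 1 ≤ dY)
    (hdX : ∀ x, (Finset.univ.filter fun y => R x y).card = dX)
    (hdY : ∀ y, (Finset.univ.filter fun x => R x y).card = dY)
    (γ ε : ℝ) (hγ : 0 < γ) (hε : 0 < ε)
    (hext : ∀ P : X → ℝ, (∀ x, 0 ≤ P x) → (∑ x, P x) = 1 →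
      (∀ x, P x ≤ 1 / (γ * (Fintype.card X : ℝ))) →
      (1 / 2) * ∑ y, |(∑ x, if R x y then P x else 0) / (dX : ℝ)
          - 1 / (Fintype.card Y : ℝ)| ≤ ε) :
    ∀ V₁ : Finset (X ⊕ Y),
      V₁.card ≤ (Fintype.card (X ⊕ Y) + 1) / 2 →
      V₁ᶜ.card ≤ (Fintype.card (X ⊕ Y) + 1) / 2 →
      ((Finset.univ.filter fun p : X × Y =>
            R p.1 p.2 ∧ Sum.inl p.1 ∈ V₁ ∧ Sum.inr p.2 ∈ V₁).card : ℝ)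
        + ((Finset.univ.filter fun p : X × Y =>
            R p.1 p.2 ∧ Sum.inl p.1 ∈ V₁ᶜ ∧ Sum.inr p.2 ∈ V₁ᶜ).card : ℝ)
      ≤ (1 + 4 * (γ + ε)) *
          ((Finset.univ.filter fun p : X × Y => R p.1 p.2).card : ℝ) / 2 := by
  intro V₁ hV₁ hV₂
  classical
  set S := Finset.univ.filter (fun x : X => Sum.inl x ∈ V₁) with hSdef
  set T := Finset.univ.filter (fun y : Y => Sum.inr y ∈ V₁) with hTdef
  set S' := Finset.univ.filter (fun x : X => ¬ Sum.inl x ∈ V₁) with hS'def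
  set T' := Finset.univ.filter (fun y : Y => ¬ Sum.inr y ∈ V₁) with hT'def
  -- the four edge counts
  set e11 := ∑ x ∈ S, ∑ y ∈ T, (if R x y then (1:ℝ) else 0) with he11
  set e12 := ∑ x ∈ S, ∑ y ∈ T', (if R x y then (1:ℝ) else 0) with he12
  set e21 := ∑ x ∈ S', ∑ y ∈ T, (if R x y then (1:ℝ) else 0) with he21
  set e22 := ∑ x ∈ S', ∑ y ∈ T', (if R x y then (1:ℝ) else 0) with he22
  have hcompl1 : (Finset.univ.filter fun x : X => Sum.inl x ∈ V₁ᶜ) = S' := by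
    rw [hS'def]; ext x; simp
  have hcompl2 : (Finset.univ.filter fun y : Y => Sum.inr y ∈ V₁ᶜ) = T' := by
    rw [hT'def]; ext y; simp
  have hI1 : ((Finset.univ.filter fun p : X × Y =>
      R p.1 p.2 ∧ Sum.inl p.1 ∈ V₁ ∧ Sum.inr p.2 ∈ V₁).card : ℝ) = e11 :=
    count_pairs R (fun x : X => Sum.inl x ∈ V₁) (fun y : Y => Sum.inr y ∈ V₁)
  have hI2 : ((Finset.univ.filter fun p : X × Y =>
      R p.1 p.2 ∧ Sum.inl p.1 ∈ V₁ᶜ ∧ Sum.inr p.2 ∈ V₁ᶜ).card : ℝ) = e22 := by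
    rw [count_pairs R (fun x : X => Sum.inl x ∈ V₁ᶜ) (fun y : Y => Sum.inr y ∈ V₁ᶜ)]
    rw [hcompl1, hcompl2]
  have rowS : ∀ A : Finset X,
      ∑ x ∈ A, ∑ y, (if R x y then (1:ℝ) else 0) = (A.card : ℝ) * dX := fun A => by
    rw [Finset.sum_congr rfl fun x _ => deg_sum' R dX hdX x, Finset.sum_const, nsmul_eq_mul]
  have hIE : ((Finset.univ.filter fun p : X × Y => R p.1 p.2).card : ℝ)
      = ((Fintype.card X : ℝ)) * dX := by
    rw [count_all R, rowS Finset.univ, Finset.card_univ]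
  rw [hI1, hI2, hIE]
  -- row identities
  have hrow1 : e11 + e12 = (S.card : ℝ) * dX := by
    rw [he11, he12, ← Finset.sum_add_distrib]
    rw [← rowS S]
    exact Finset.sum_congr rfl fun x _ =>
      Finset.sum_filter_add_sum_filter_not Finset.univ _ _
  have hrow2 : e21 + e22 = (S'.card : ℝ) * dX := by
    rw [he21, he22, ← Finset.sum_add_distrib]
    rw [← rowS S']
    exact Finset.sum_congr rfl fun x _ =>
      Finset.sum_filter_add_sum_filter_not Finset.univ _ _
  -- cardinalities
  have hsn : S.card + S'.card = Fintype.card X := by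
    rw [hSdef, hS'def, Finset.card_filter_add_card_filter_not, Finset.card_univ]
  have htm : T.card + T'.card = Fintype.card Y := by
    rw [hTdef, hT'def, Finset.card_filter_add_card_filter_not, Finset.card_univ]
  have hVcard : V₁.card = S.card + T.card := by
    conv_lhs => rw [← Finset.filter_univ_mem V₁]
    rw [Finset.card_filter, Fintype.sum_sum_type, hSdef, hTdef,
      Finset.card_filter, Finset.card_filter]
  clear_value e11 e12 e21 e22
  have hVc : V₁ᶜ.card = Fintype.card (X ⊕ Y) - V₁.card := Finset.card_compl V₁
  have hNcard : Fintype.card (X ⊕ Y) = Fintype.card X + Fintype.card Y := Fintype.card_sum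
  have hVle : V₁.card ≤ Fintype.card (X ⊕ Y) := by
    rw [← Finset.card_univ]; exact Finset.card_le_card (Finset.subset_univ V₁)
  have hb1 : 2 * (S.card + T.card) ≤ Fintype.card X + Fintype.card Y + 1 := by omega
  have hb2 : Fintype.card X + Fintype.card Y ≤ 2 * (S.card + T.card) + 1 := by omega
  -- nonnegativity
  have hsumnn : ∀ (A : Finset X) (B : Finset Y),
      (0:ℝ) ≤ ∑ x ∈ A, ∑ y ∈ B, (if R x y then (1:ℝ) else 0) := fun A B =>
    Finset.sum_nonneg fun x _ => Finset.sum_nonneg fun y _ => by split <;> norm_num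
  have he12nn : (0:ℝ) ≤ e12 := he12 ▸ hsumnn S T'
  have he21nn : (0:ℝ) ≤ e21 := he21 ▸ hsumnn S' T
  have he11nn : (0:ℝ) ≤ e11 := he11 ▸ hsumnn S T
  have he22nn : (0:ℝ) ≤ e22 := he22 ▸ hsumnn S' T'
  have hdX0 : (0:ℝ) < dX := by exact_mod_cast hdX1
  have hsnR : (S.card : ℝ) + (S'.card : ℝ) = (Fintype.card X : ℝ) := by exact_mod_cast hsn
  have htmR : (T.card : ℝ) + (T'.card : ℝ) = (Fintype.card Y : ℝ) := by exact_mod_cast htm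
  have htotal : e11 + e12 + e21 + e22 = (Fintype.card X : ℝ) * dX := by
    have h : (S.card:ℝ)*dX + (S'.card:ℝ)*dX = (Fintype.card X : ℝ)*dX := by
      rw [← add_mul, hsnR]
    linarith
  clear_value S T S' T'
  rcases Nat.eq_zero_or_pos (Fintype.card X) with hn0 | hn1
  · have : (Fintype.card X : ℝ) * dX = 0 := by rw [hn0]; simp
    rw [this] at htotal ⊢
    linarith
  -- now X is nonempty, so Y is nonempty
  obtain ⟨x₀⟩ := Fintype.card_pos_iff.mp hn1
  have hm1 : 1 ≤ Fintype.card Y := by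
    have h := hdX x₀
    have hne : (Finset.univ.filter fun y => R x₀ y).Nonempty := by
      rw [← Finset.card_pos, h]; omega
    obtain ⟨y₀, _⟩ := hne
    exact Fintype.card_pos_iff.mpr ⟨y₀⟩
  have hn1R : (1:ℝ) ≤ (Fintype.card X : ℝ) := by exact_mod_cast hn1
  have hm1R : (1:ℝ) ≤ (Fintype.card Y : ℝ) := by exact_mod_cast hm1
  have hm0R : (0:ℝ) < (Fintype.card Y : ℝ) := by linarith
  have hnd0 : (0:ℝ) ≤ (Fintype.card X : ℝ) * dX := by positivity
  by_cases htriv : γ + ε < 1/4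
  · -- main case
    have hb1R : 2 * ((S.card:ℝ) + (T.card:ℝ)) ≤ (Fintype.card X : ℝ) + (Fintype.card Y : ℝ) + 1 := by
      exact_mod_cast hb1
    have hb2R : (Fintype.card X : ℝ) + (Fintype.card Y : ℝ) - 1 ≤ 2 * ((S.card:ℝ) + (T.card:ℝ)) := by
      have : ((Fintype.card X + Fintype.card Y : ℕ) : ℝ) ≤ ((2 * (S.card + T.card) + 1 : ℕ) : ℝ) := by
        exact_mod_cast hb2
      push_cast at this
      linarith
    have hs'R : (S'.card : ℝ) = (Fintype.card X : ℝ) - S.card := by linarith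
    have ht'R : (T'.card : ℝ) = (Fintype.card Y : ℝ) - T.card := by linarith
    have hs0R : (0:ℝ) ≤ (S.card : ℝ) := Nat.cast_nonneg _
    have hs'0R : (0:ℝ) ≤ (S'.card : ℝ) := Nat.cast_nonneg _
    have ht0R : (0:ℝ) ≤ (T.card : ℝ) := Nat.cast_nonneg _
    have ht'0R : (0:ℝ) ≤ (T'.card : ℝ) := Nat.cast_nonneg _
    have htmleR : (T.card : ℝ) ≤ (Fintype.card Y : ℝ) := by linarith
    have ht'mleR : (T'.card : ℝ) ≤ (Fintype.card Y : ℝ) := by linarith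
    suffices hcross : (1/2 - 2*(γ+ε)) * ((Fintype.card X : ℝ) * dX) ≤ e12 + e21 by
      linarith
    by_cases hB : 0 < S.card ∧ (S.card : ℝ) < γ * (Fintype.card X : ℝ)
    · -- Case B : small nonempty S
      have hγle : γ * (Fintype.card X : ℝ) ≤ (Fintype.card X : ℝ) := by
        calc γ * (Fintype.card X : ℝ) ≤ 1 * (Fintype.card X : ℝ) :=
              mul_le_mul_of_nonneg_right (by linarith) (Nat.cast_nonneg _)
          _ = (Fintype.card X : ℝ) := one_mul _
      have hsltn : (S.card : ℝ) < (Fintype.card X : ℝ) := lt_of_lt_of_le hB.2 hγle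
      have hsltnN : S.card < Fintype.card X := by exact_mod_cast hsltn
      have hS'ne : S'.Nonempty := Finset.card_pos.mp (by omega)
      have h2γn : (2*γ) * (Fintype.card X : ℝ) ≤ (Fintype.card X : ℝ) := by
        calc (2*γ) * (Fintype.card X : ℝ) ≤ 1 * (Fintype.card X : ℝ) :=
              mul_le_mul_of_nonneg_right (by linarith) (Nat.cast_nonneg _)
          _ = (Fintype.card X : ℝ) := one_mul _
      have hS'γ : γ * (Fintype.card X : ℝ) ≤ (S'.card : ℝ) := by
        rw [hs'R]
        linarith [hB.2, h2γn]
      have hmix := mix_lemma R dX hdX1 hdX γ ε hγ hext S' hS'ne hS'γ T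
      rw [← he21] at hmix
      have harith := caseB_real (Fintype.card X : ℝ) (Fintype.card Y : ℝ)
        (S.card : ℝ) (T.card : ℝ) γ ε hn1R hm1R hγ hε htriv hs0R hB.2.le ht0R htmleR hb2R
      have hstep := mul_le_mul_of_nonneg_right harith hdX0.le
      rw [hs'R] at hmix
      linarith
    · by_cases hC : 0 < S'.card ∧ (S'.card : ℝ) < γ * (Fintype.card X : ℝ)
      · -- Case C : small nonempty S'
        have hγle : γ * (Fintype.card X : ℝ) ≤ (Fintype.card X : ℝ) := by
          calc γ * (Fintype.card X : ℝ) ≤ 1 * (Fintype.card X : ℝ) :=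
                mul_le_mul_of_nonneg_right (by linarith) (Nat.cast_nonneg _)
            _ = (Fintype.card X : ℝ) := one_mul _
        have hsltn : (S'.card : ℝ) < (Fintype.card X : ℝ) := lt_of_lt_of_le hC.2 hγle
        have hsltnN : S'.card < Fintype.card X := by exact_mod_cast hsltn
        have hSne : S.Nonempty := Finset.card_pos.mp (by omega)
        have h2γn : (2*γ) * (Fintype.card X : ℝ) ≤ (Fintype.card X : ℝ) := by
          calc (2*γ) * (Fintype.card X : ℝ) ≤ 1 * (Fintype.card X : ℝ) :=
                mul_le_mul_of_nonneg_right (by linarith) (Nat.cast_nonneg _)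
            _ = (Fintype.card X : ℝ) := one_mul _
        have hSγ : γ * (Fintype.card X : ℝ) ≤ (S.card : ℝ) := by
          linarith [hC.2, h2γn, hsnR]
        have hmix := mix_lemma R dX hdX1 hdX γ ε hγ hext S hSne hSγ T'
        rw [← he12] at hmix
        have hbal' : (Fintype.card X : ℝ) + (Fintype.card Y : ℝ) - 1
            ≤ 2 * ((S'.card:ℝ) + (T'.card:ℝ)) := by
          rw [hs'R, ht'R]; linarith
        have harith := caseB_real (Fintype.card X : ℝ) (Fintype.card Y : ℝ)
          (S'.card : ℝ) (T'.card : ℝ) γ ε hn1R hm1R hγ hε htriv hs'0R hC.2.le ht'0R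
          ht'mleR hbal'
        have hstep := mul_le_mul_of_nonneg_right harith hdX0.le
        rw [hs'R] at hstep
        linarith
      · -- Case A
        push_neg at hB hC
        have h1 : (S.card:ℝ) * dX * ((T'.card : ℝ)/(Fintype.card Y : ℝ) - ε) ≤ e12 := by
          rw [he12]
          rcases Nat.eq_zero_or_pos S.card with h0 | hpos
          · rw [h0, Nat.cast_zero, zero_mul, zero_mul]; exact hsumnn S T'
          · exact mix_lemma R dX hdX1 hdX γ ε hγ hext S
              (Finset.card_pos.mp hpos) (hB hpos) T'
        have h2 : (S'.card:ℝ) * dX * ((T.card : ℝ)/(Fintype.card Y : ℝ) - ε) ≤ e21 := by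
          rw [he21]
          rcases Nat.eq_zero_or_pos S'.card with h0 | hpos
          · rw [h0, Nat.cast_zero, zero_mul, zero_mul]; exact hsumnn S' T
          · exact mix_lemma R dX hdX1 hdX γ ε hγ hext S'
              (Finset.card_pos.mp hpos) (hC hpos) T
        have hprodZ : (2*(S.card:ℤ) - (Fintype.card X : ℤ)) * (2*(T.card:ℤ) - (Fintype.card Y : ℤ)) ≤ 0 :=
          int_prod_nonpos _ _ _ _ (by exact_mod_cast hb1) (by exact_mod_cast hb2)
        have hprodR : (2*(S.card:ℝ) - (Fintype.card X : ℝ)) * (2*(T.card:ℝ) - (Fintype.card Y : ℝ)) ≤ 0 := by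
          exact_mod_cast hprodZ
        have key : (Fintype.card X : ℝ) * (Fintype.card Y : ℝ) / 2
            ≤ (S.card:ℝ)*((Fintype.card Y : ℝ) - T.card) + ((Fintype.card X : ℝ) - S.card)*(T.card:ℝ) := by
          linarith [hprodR, sq_nonneg (0:ℝ)]
        have key2 : (dX:ℝ) * (Fintype.card X : ℝ) / 2
            ≤ (dX:ℝ) * ((S.card:ℝ)*((Fintype.card Y : ℝ) - T.card)
                + ((Fintype.card X : ℝ) - S.card)*(T.card:ℝ)) / (Fintype.card Y : ℝ) := by
          rw [le_div_iff₀ hm0R]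
          have := mul_le_mul_of_nonneg_left key hdX0.le
          linarith [this]
        rw [hs'R] at h2
        rw [ht'R] at h1
        simp only [div_eq_mul_inv] at h1 h2 key2
        linarith [h1, h2, key2, mul_nonneg hγ.le hnd0, mul_nonneg hε.le hnd0]
  · -- trivial case : γ + ε ≥ 1/4
    push_neg at htriv
    linarith [htotal, he12nn, he21nn, mul_nonneg hnd0 (by linarith : (0:ℝ) ≤ 4*(γ+ε) - 1)]
end

section
/- Let Π = (G = (V, E), Σ, {C_e}) be a 2-CSP instance and let ψ_s and ψ_t be satisfying assignments of Π. Then there exists a satisfying reconfiguration multi-assignment sequence starting at the multi-assignment v ↦ {ψ_s(v)} and ending at v ↦ {ψ_t(v)} in which every multi-assignment has size at most 2·|V|. -/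
/-
Pass through the multi-assignment `v ↦ {ψs v, ψt v}`: first add the label `ψt v` at every
vertex where the two assignments differ, then remove `ψs v` at each of these vertices. During
the first phase every multi-assignment contains `ψs`, during the second it contains `ψt`, so it
satisfies the instance; and no vertex ever carries more than two labels.
-/

open Finset Relation Function
open scoped Classical

theorem Relation.ReflTransGen.exists_seq_of_and {β : Type*} {r : β → β → Prop} {P : β → Prop}
    {a b : β} (ha : P a) (h : ReflTransGen (fun x y => r x y ∧ P y) a b) :
    ∃ (n : ℕ) (f : ℕ → β), f 0 = a ∧ f n = b ∧ (∀ i < n, r (f i) (f (i + 1))) ∧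
      ∀ i ≤ n, P (f i) := by
  induction h with
  | refl => exact ⟨0, fun _ => a, rfl, rfl, by simp, fun _ _ => ha⟩
  | @tail c d _ hcd ih =>
    obtain ⟨n, f, h0, hn, hr, hP⟩ := ih
    refine ⟨n + 1, fun i => if i ≤ n then f i else d, by simpa using h0, by simp, ?_, ?_⟩
    · intro i hi
      rcases Nat.lt_or_eq_of_le (Nat.lt_succ_iff.mp hi) with hi | rfl
      · simpa [hi.le, Nat.succ_le_of_lt hi] using hr i hi
      · simpa [hn] using hcd.1
    · intro i hi
      rcases Nat.lt_or_eq_of_le hi with hi | rfl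
      · simpa [Nat.lt_succ_iff.mp hi] using hP i (Nat.lt_succ_iff.mp hi)
      · simpa using hcd.2

theorem Relation.reflTransGen_of_piecewise_update {ι β : Type*} [Fintype ι]
    {r : (ι → β) → (ι → β) → Prop} {f g : ι → β}
    (h : ∀ (s : Finset ι) (i : ι), i ∉ s →
      ReflTransGen r (s.piecewise g f) (update (s.piecewise g f) i (g i))) :
    ReflTransGen r f g := by
  suffices ∀ s : Finset ι, ReflTransGen r f (s.piecewise g f) by
    simpa using this univ
  intro s
  induction s using Finset.induction_on with
  | empty => simpa using ReflTransGen.refl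
  | insert i s hi ih => rw [piecewise_insert]; exact ih.trans (h s i hi)

theorem Finset.card_symmDiff_le_one_of_subset {α : Type*} [DecidableEq α] {s t : Finset α}
    (hst : s ⊆ t) (ht : #t ≤ #s + 1) : #(symmDiff s t) ≤ 1 := by
  rw [symmDiff_of_le hst, card_sdiff_of_subset hst]
  omega

section MultiAssignment

variable {V α : Type*}

def MultiSatisfies (G : SimpleGraph V) (C : V → V → α → α → Prop) (Φ : V → Finset α) : Prop :=
  ∀ u v, G.Adj u v → ∃ a ∈ Φ u, ∃ b ∈ Φ v, C u v a b

theorem multiSatisfies_of_mem {G : SimpleGraph V} {C : V → V → α → α → Prop} {ψ : V → α}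
    (hψ : ∀ u v, G.Adj u v → C u v (ψ u) (ψ v)) {Φ : V → Finset α} (hmem : ∀ v, ψ v ∈ Φ v) :
    MultiSatisfies G C Φ :=
  fun u v huv => ⟨ψ u, hmem u, ψ v, hmem v, hψ u v huv⟩

variable [Fintype V]

def multiSize (Φ : V → Finset α) : ℕ :=
  ∑ v, #(Φ v)

theorem multiSize_le {Φ : V → Finset α} {k : ℕ} (h : ∀ v, #(Φ v) ≤ k) :
    multiSize Φ ≤ k * Fintype.card V := by
  unfold multiSize
  simpa [mul_comm] using sum_le_sum fun v (_ : v ∈ univ) => h v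

variable [DecidableEq α]

def AreNeighbors (Φ Ψ : V → Finset α) : Prop :=
  ∑ v, #(symmDiff (Φ v) (Ψ v)) = 1

theorem areNeighbors_update (Φ : V → Finset α) (v : V) (t : Finset α)
    (h : #(symmDiff (Φ v) t) = 1) : AreNeighbors Φ (update Φ v t) := by
  unfold AreNeighbors
  rw [sum_eq_single v (fun w _ hw => by simp [update_of_ne hw]) (by simp)]
  simpa using h

theorem reflTransGen_areNeighbors_of_piecewise {P : (V → Finset α) → Prop}
    {Φ Ψ : V → Finset α} (hΦΨ : ∀ v, #(symmDiff (Φ v) (Ψ v)) ≤ 1)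
    (hP : ∀ S : Finset V, P (S.piecewise Ψ Φ)) :
    ReflTransGen (fun X Y => AreNeighbors X Y ∧ P Y) Φ Ψ := by
  refine reflTransGen_of_piecewise_update fun S v hv => ?_
  have hSv : S.piecewise Ψ Φ v = Φ v := piecewise_eq_of_notMem _ _ _ hv
  rcases Nat.le_one_iff_eq_zero_or_eq_one.mp (hΦΨ v) with h0 | h1
  · have : Φ v = Ψ v := symmDiff_eq_bot.mp (card_eq_zero.mp h0)
    rw [← this, ← hSv, update_eq_self]
  · refine ReflTransGen.single ⟨areNeighbors_update _ v _ (by rwa [hSv]), ?_⟩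
    rw [← piecewise_insert]
    exact hP _

theorem reflTransGen_of_forall_mem_card_le {G : SimpleGraph V} {C : V → V → α → α → Prop}
    {ψ : V → α} (hψ : ∀ u v, G.Adj u v → C u v (ψ u) (ψ v)) {k : ℕ} {Φ Ψ : V → Finset α}
    (hΦΨ : ∀ v, #(symmDiff (Φ v) (Ψ v)) ≤ 1) (hΦ : ∀ v, ψ v ∈ Φ v ∧ #(Φ v) ≤ k)
    (hΨ : ∀ v, ψ v ∈ Ψ v ∧ #(Ψ v) ≤ k) :
    ReflTransGen (fun X Y => AreNeighbors X Y ∧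
      (MultiSatisfies G C Y ∧ multiSize Y ≤ k * Fintype.card V)) Φ Ψ := by
  refine reflTransGen_areNeighbors_of_piecewise hΦΨ fun S => ?_
  have hS v : ψ v ∈ S.piecewise Ψ Φ v ∧ #(S.piecewise Ψ Φ v) ≤ k :=
    S.piecewise_cases Ψ Φ (fun s => ψ v ∈ s ∧ #s ≤ k) (hΨ v) (hΦ v)
  exact ⟨multiSatisfies_of_mem hψ fun v => (hS v).1, multiSize_le fun v => (hS v).2⟩

end MultiAssignment

theorem multiassignment_sequence_two_approx_general {V α : Type*} [Fintype V] [DecidableEq α]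
    (G : SimpleGraph V)
    (C : V → V → α → α → Prop)
    (ψs ψt : V → α)
    (hψs : ∀ u v, G.Adj u v → C u v (ψs u) (ψs v))
    (hψt : ∀ u v, G.Adj u v → C u v (ψt u) (ψt v)) :
    ∃ (p : ℕ) (Φ : ℕ → V → Finset α),
      Φ 0 = (fun v => {ψs v}) ∧ Φ p = (fun v => {ψt v}) ∧
      (∀ i < p, ∑ v : V, (symmDiff (Φ i v) (Φ (i + 1) v)).card = 1) ∧
      (∀ i ≤ p, ∀ u v, G.Adj u v → ∃ a ∈ Φ i u, ∃ b ∈ Φ i v, C u v a b) ∧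
      (∀ i ≤ p, ∑ v : V, (Φ i v).card ≤ 2 * Fintype.card V) := by
  have singleton_le (a : α) : #({a} : Finset α) ≤ 2 := (card_singleton a).trans_le one_le_two
  have add_ψt := reflTransGen_of_forall_mem_card_le hψs
    (Φ := fun v => {ψs v}) (Ψ := fun v => {ψs v, ψt v})
    (fun v => card_symmDiff_le_one_of_subset (by simp) (card_insert_le _ _))
    (fun v => ⟨mem_singleton_self _, singleton_le _⟩) (fun v => ⟨by simp, card_le_two⟩)
  have remove_ψs := reflTransGen_of_forall_mem_card_le hψt
    (Φ := fun v => {ψs v, ψt v}) (Ψ := fun v => {ψt v})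
    (fun v => symmDiff_comm ({ψt v} : Finset α) _ ▸ card_symmDiff_le_one_of_subset (by simp) (card_insert_le _ _))
    (fun v => ⟨by simp, card_le_two⟩) (fun v => ⟨mem_singleton_self _, singleton_le _⟩)
  obtain ⟨p, Φ, h0, hp, hstep, hgood⟩ := (add_ψt.trans remove_ψs).exists_seq_of_and
    ⟨multiSatisfies_of_mem hψs fun v => mem_singleton_self _, multiSize_le fun v => singleton_le _⟩
  exact ⟨p, Φ, h0, hp, hstep, fun i hi => (hgood i hi).1, fun i hi => (hgood i hi).2⟩

/-- Let `Π` be a 2-CSP with constraint graph `G`, alphabet `α` and (symmetric)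
constraints `C`, and let `ψs, ψt` be satisfying assignments. Then there is a satisfying
reconfiguration multi-assignment sequence from `v ↦ {ψs v}` to `v ↦ {ψt v}` (consecutive
multi-assignments differing by exactly one label, every multi-assignment satisfying `Π`)
in which every multi-assignment has size at most `2·|V|`. -/
theorem multiassignment_sequence_two_approx {V α : Type*} [Fintype V] [DecidableEq α]
    (G : SimpleGraph V)
    (C : V → V → α → α → Prop) (hC : ∀ u v a b, C u v a b ↔ C v u b a)
    (ψs ψt : V → α)
    (hψs : ∀ u v, G.Adj u v → C u v (ψs u) (ψs v))
    (hψt : ∀ u v, G.Adj u v → C u v (ψt u) (ψt v)) :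
    ∃ (p : ℕ) (Φ : ℕ → V → Finset α),
      Φ 0 = (fun v => {ψs v}) ∧ Φ p = (fun v => {ψt v}) ∧
      (∀ i < p, ∑ v : V, (symmDiff (Φ i v) (Φ (i + 1) v)).card = 1) ∧
      (∀ i ≤ p, ∀ u v, G.Adj u v → ∃ a ∈ Φ i u, ∃ b ∈ Φ i v, C u v a b) ∧
      (∀ i ≤ p, ∑ v : V, (Φ i v).card ≤ 2 * Fintype.card V) :=
  multiassignment_sequence_two_approx_general G C ψs ψt hψs hψt
end

section
/- Let Π = (G = (V, E), Σ, {C_e}) be a 2-CSP instance and suppose there is a reconfiguration assignment sequence ψ₀, …, ψ_p (consecutive assignments differing on exactly one variable) in which every ψ_i is a satisfying assignment of Π. Then there exists a satisfying reconfiguration multi-assignment sequence starting at the multi-assignment v ↦ {ψ₀(v)} and ending at v ↦ {ψ_p(v)} in which every multi-assignment has size at most |V| + 1. -/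
open Finset
open scoped Classical

lemma cu2 {α : Type*} [DecidableEq α] {a b : α} (h : ¬ a = b) :
    ({a} ∪ {b} : Finset α).card = 2 := by
  rw [Finset.card_union_of_disjoint (by simp [h, eq_comm])]; simp

lemma sd1 {α : Type*} [DecidableEq α] (a b : α) :
    (symmDiff ({a} : Finset α) ({a} ∪ {b})).card = if a = b then 0 else 1 := by
  by_cases h : a = b <;>
    simp [symmDiff_def, h, Finset.union_sdiff_left,
      Finset.sdiff_singleton_eq_erase, Finset.erase_singleton, cu2]

lemma sd2 {α : Type*} [DecidableEq α] (a b : α) :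
    (symmDiff (({a} : Finset α) ∪ {b}) ({b} : Finset α)).card = if a = b then 0 else 1 := by
  by_cases h : a = b <;>
    simp [symmDiff_def, h, Finset.union_sdiff_right,
      Finset.sdiff_singleton_eq_erase, Finset.erase_singleton, cu2]

lemma cu_le {α : Type*} [DecidableEq α] (a b : α) :
    ({a} ∪ {b} : Finset α).card ≤ 1 + if a = b then 0 else 1 := by
  by_cases h : a = b <;> simp [h, cu2]

/-- Let `Π` be a 2-CSP with constraint graph `G`, alphabet `α` and (symmetric)
constraints `C`, and suppose there is a reconfiguration assignment sequence `ψ₀, …, ψ_p`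
(consecutive assignments differing on exactly one variable) in which every assignment satisfies
all constraints of `Π`. Then there is a satisfying reconfiguration multi-assignment sequence
from `v ↦ {ψ₀ v}` to `v ↦ {ψ_p v}` (consecutive multi-assignments differing by exactly one
label, every multi-assignment satisfying `Π`) in which every multi-assignment has size at most
`|V| + 1`. -/
theorem multiassignment_sequence_from_assignment_sequence {V α : Type*} [Fintype V]
    [DecidableEq α] (G : SimpleGraph V)
    (C : V → V → α → α → Prop) (hC : ∀ u v a b, C u v a b ↔ C v u b a)
    (p : ℕ) (ψ : ℕ → V → α)
    (hstep : ∀ i < p, (Finset.univ.filter fun v => ψ i v ≠ ψ (i + 1) v).card = 1)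
    (hsat : ∀ i ≤ p, ∀ u v, G.Adj u v → C u v (ψ i u) (ψ i v)) :
    ∃ (q : ℕ) (Φ : ℕ → V → Finset α),
      Φ 0 = (fun v => {ψ 0 v}) ∧ Φ q = (fun v => {ψ p v}) ∧
      (∀ j < q, ∑ v : V, (symmDiff (Φ j v) (Φ (j + 1) v)).card = 1) ∧
      (∀ j ≤ q, ∀ u v, G.Adj u v → ∃ a ∈ Φ j u, ∃ b ∈ Φ j v, C u v a b) ∧
      (∀ j ≤ q, ∑ v : V, (Φ j v).card ≤ Fintype.card V + 1) := by
  classical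
  have h10 : ¬ (1 : ℕ) = 0 := one_ne_zero
  have hsum : ∀ i, i < p →
      ∑ v : V, (if ψ i v = ψ (i + 1) v then 0 else 1) = 1 := by
    intro i hi
    have key : ∑ v : V, (if ψ i v = ψ (i + 1) v then 0 else 1)
        = (Finset.univ.filter fun v => ψ i v ≠ ψ (i + 1) v).card := by
      rw [Finset.card_filter]
      refine Finset.sum_congr rfl fun v _ => ?_
      by_cases h : ψ i v = ψ (i + 1) v <;> simp [h]
    rw [key]; exact hstep i hi
  refine ⟨2 * p,
    fun j v => if j % 2 = 0 then {ψ (j / 2) v} else {ψ (j / 2) v} ∪ {ψ (j / 2 + 1) v},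
    ?_, ?_, ?_, ?_, ?_⟩
  · funext v; simp
  · funext v; simp [Nat.mul_div_cancel_left, Nat.mul_mod_right]
  · intro j hj
    rcases Nat.mod_two_eq_zero_or_one j with h | h
    · have h1 : (j + 1) % 2 = 1 := by omega
      have h2 : (j + 1) / 2 = j / 2 := by omega
      have hi : j / 2 < p := by omega
      simp only [h, h1, h2, if_pos rfl, if_neg h10]
      calc ∑ v : V, (symmDiff ({ψ (j/2) v} : Finset α) ({ψ (j/2) v} ∪ {ψ (j/2+1) v})).card
          = ∑ v : V, (if ψ (j/2) v = ψ (j/2+1) v then 0 else 1) :=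
            Finset.sum_congr rfl fun v _ => sd1 _ _
        _ = 1 := hsum _ hi
    · have h1 : (j + 1) % 2 = 0 := by omega
      have h2 : (j + 1) / 2 = j / 2 + 1 := by omega
      have hi : j / 2 < p := by omega
      simp only [h, h1, h2, if_pos rfl, if_neg h10]
      calc ∑ v : V, (symmDiff (({ψ (j/2) v} : Finset α) ∪ {ψ (j/2+1) v}) {ψ (j/2+1) v}).card
          = ∑ v : V, (if ψ (j/2) v = ψ (j/2+1) v then 0 else 1) :=
            Finset.sum_congr rfl fun v _ => sd2 _ _
        _ = 1 := hsum _ hi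
  · intro j hj u v huv
    have hle : j / 2 ≤ p := by omega
    rcases Nat.mod_two_eq_zero_or_one j with h | h
    · refine ⟨ψ (j/2) u, ?_, ψ (j/2) v, ?_, hsat _ hle u v huv⟩ <;> simp [h]
    · refine ⟨ψ (j/2) u, ?_, ψ (j/2) v, ?_, hsat _ hle u v huv⟩ <;> simp [h]
  · intro j hj
    rcases Nat.mod_two_eq_zero_or_one j with h | h
    · simp only [h, if_pos rfl]
      simp
    · have hi : j / 2 < p := by omega
      simp only [h, if_neg h10]
      calc ∑ v : V, (({ψ (j/2) v} : Finset α) ∪ {ψ (j/2+1) v}).card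
          ≤ ∑ v : V, (1 + if ψ (j/2) v = ψ (j/2+1) v then 0 else 1) :=
            Finset.sum_le_sum fun v _ => cu_le _ _
        _ = Fintype.card V + ∑ v : V, (if ψ (j/2) v = ψ (j/2+1) v then 0 else 1) := by
            rw [Finset.sum_add_distrib]; simp
        _ = Fintype.card V + 1 := by rw [hsum _ hi]
end
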